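/- Let s ≥ 3 be an integer such that the binomial coefficient C(s−1, 2) is odd, and let G be the bipartite graph with bipartition (X, Y) where |X| = s, Y is in bijection with the 3-element subsets of X, and each vertex of Y is adjacent exactly to the three elements of its corresponding subset (so for every A ⊆ X with |A| = 3 there is exactly one v ∈ Y with N(v) = A). Then χ_so(G) = 2 and χ_pcf(G) ≥ |X|/2. -/

import Mathlib

/-- The simple graph generated by a relation (symmetrized, loops removed). -/
def graphOfRel {V : Type} (r : V → V → Prop) : SimpleGraph V where
  Adj x y := x ≠ y ∧ (r x y ∨ r y x)
  symm := ⟨fun _ _ h => ⟨h.1.symm, h.2.symm⟩⟩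
  loopless := ⟨fun _ h => h.1 rfl⟩

/-- Vertices: the set `X = Fin s` together with one vertex for each 3-element subset
of `X`. -/
abbrev TripleVertex (s : ℕ) : Type :=
  Fin s ⊕ {A : Finset (Fin s) // A.card = 3}

/-- Each subset-vertex is joined exactly to the three elements of its subset. -/
def tripleRel (s : ℕ) : TripleVertex s → TripleVertex s → Prop
  | Sum.inl x, Sum.inr A => x ∈ A.val
  | _, _ => False

/-- The bipartite graph with `X = Fin s` on one side and all 3-element subsets of `X`
on the other, each subset adjacent to its three elements. -/
def tripleGraph (s : ℕ) : SimpleGraph (TripleVertex s) :=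
  graphOfRel (tripleRel s)

/-- `G` has a proper conflict-free coloring with `k` colors. -/
def HasPCFColoring {V : Type} (G : SimpleGraph V) (k : ℕ) : Prop :=
  ∃ c : V → Fin k, (∀ u v : V, G.Adj u v → c u ≠ c v) ∧
    ∀ v : V, (G.neighborSet v).Nonempty →
      ∃ i : Fin k, {u | u ∈ G.neighborSet v ∧ c u = i}.ncard = 1

/-- `G` has a strong odd coloring with `k` colors. -/
def HasStrongOddColoring {V : Type} (G : SimpleGraph V) (k : ℕ) : Prop :=
  ∃ c : V → Fin k, (∀ u v : V, G.Adj u v → c u ≠ c v) ∧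
    ∀ v : V, (G.neighborSet v).Nonempty →
      ∀ i : Fin k, {u | u ∈ G.neighborSet v ∧ c u = i}.Nonempty →
        Odd {u | u ∈ G.neighborSet v ∧ c u = i}.ncard

/-!
Colouring `X` with one colour and the triples with the other is proper, and every vertex sees
all of its neighbours in one colour: a triple sees its `3` elements, an element of `X` sees the
`C(s-1, 2)` triples through it, both odd numbers. A single colour cannot be proper because the
graph has an edge. In a proper conflict-free colouring no colour occurs three times on `X`, so
at least `s / 2` colours are needed.
-/

section Colorings

variable {V : Type} {G : SimpleGraph V}

theorem hasStrongOddColoring_two_of_odd_ncard_neighborSet (c : V → Fin 2)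
    (hc : ∀ u v, G.Adj u v → c u ≠ c v)
    (hodd : ∀ v, (G.neighborSet v).Nonempty → Odd (G.neighborSet v).ncard) :
    HasStrongOddColoring G 2 := by
  refine ⟨c, hc, fun v hv i ⟨u, hu, hui⟩ => ?_⟩
  -- With two colours, every neighbour of `v` gets the colour that `v` does not have.
  have hclass : {w | w ∈ G.neighborSet v ∧ c w = i} = G.neighborSet v := by
    refine Set.sep_eq_self_iff_mem_true.mpr fun w hw => ?_
    have := hc v u hu
    have := hc v w hw
    omega
  rw [hclass]
  exact hodd v hv

theorem two_le_of_hasStrongOddColoring {k : ℕ} (h : HasStrongOddColoring G k) {u v : V}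
    (huv : G.Adj u v) : 2 ≤ k :=
  let ⟨c, hc, _⟩ := h
  Fin.nontrivial_iff_two_le.mp ⟨⟨c u, c v, hc u v huv⟩⟩

theorem ncard_neighborSet_eq_one_of_monochromatic {α : Type} {c : V → α} {v : V} {j : α}
    (hmono : ∀ u ∈ G.neighborSet v, c u = j)
    (hcf : ∃ i, {u | u ∈ G.neighborSet v ∧ c u = i}.ncard = 1) :
    (G.neighborSet v).ncard = 1 := by
  obtain ⟨i, hi⟩ := hcf
  by_cases hij : i = j
  · subst hij
    rwa [Set.sep_eq_self_iff_mem_true.mpr hmono] at hi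
  · have hempty : {u | u ∈ G.neighborSet v ∧ c u = i} = ∅ :=
      Set.eq_empty_of_forall_notMem fun u ⟨hu, hui⟩ => hij (hui ▸ hmono u hu)
    rw [hempty, Set.ncard_empty] at hi
    exact absurd hi zero_ne_one

end Colorings

theorem ncard_setOf_mem_of_card_eq_succ {α : Type} [Fintype α] [DecidableEq α] (n : ℕ) (x : α) :
    {A : {A : Finset α // A.card = n + 1} | x ∈ A.val}.ncard
      = (Fintype.card α - 1).choose n := by
  have himage : Subtype.val '' {A : {A : Finset α // A.card = n + 1} | x ∈ A.val}
      = ↑((Finset.univ.powersetCard (n + 1)).filter ({x} ⊆ ·)) := by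
    ext A
    simp [and_comm]
  rw [← Set.ncard_image_of_injective _ Subtype.val_injective, himage, Set.ncard_coe_finset,
    Finset.card_filter_powersetCard_subset _ _ _ (Finset.subset_univ _) (by simp)]
  simp

section TripleGraph

variable {s : ℕ}

theorem tripleGraph_neighborSet_inl (x : Fin s) :
    (tripleGraph s).neighborSet (.inl x) = Sum.inr '' {A | x ∈ A.val} := by
  ext (y | A) <;> simp [tripleGraph, graphOfRel, tripleRel]

theorem tripleGraph_neighborSet_inr (A : {A : Finset (Fin s) // A.card = 3}) :
    (tripleGraph s).neighborSet (.inr A) = Sum.inl '' ↑A.val := by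
  ext (y | B) <;> simp [tripleGraph, graphOfRel, tripleRel]

theorem tripleGraph_sideColoring_ne_of_adj {u v : TripleVertex s} (h : (tripleGraph s).Adj u v) :
    Sum.elim (fun _ => (0 : Fin 2)) (fun _ => 1) u ≠ Sum.elim (fun _ => 0) (fun _ => 1) v := by
  cases u <;> cases v <;> simp_all [tripleGraph, graphOfRel, tripleRel]

theorem tripleGraph_odd_ncard_neighborSet (hodd : Odd ((s - 1).choose 2))
    (v : TripleVertex s) : Odd ((tripleGraph s).neighborSet v).ncard := by
  cases v with
  | inl x =>
    rw [tripleGraph_neighborSet_inl, Set.ncard_image_of_injective _ Sum.inr_injective,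
      ncard_setOf_mem_of_card_eq_succ 2 x, Fintype.card_fin]
    exact hodd
  | inr A =>
    rw [tripleGraph_neighborSet_inr, Set.ncard_image_of_injective _ Sum.inl_injective,
      Set.ncard_coe_finset, A.prop]
    decide

theorem tripleGraph_exists_adj (hs : 3 ≤ s) : ∃ u v, (tripleGraph s).Adj u v := by
  obtain ⟨A, -, hA⟩ := Finset.exists_subset_card_eq (s := (Finset.univ : Finset (Fin s)))
    (by simpa using hs)
  obtain ⟨x, hx⟩ := Finset.card_pos.mp (hA ▸ three_pos)
  exact ⟨.inl x, .inr ⟨A, hA⟩, by simpa [tripleGraph, graphOfRel, tripleRel] using hx⟩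

-- A colour class of `X` with three elements would make the neighbourhood of that triple
-- monochromatic of size `3`.
theorem tripleGraph_card_colorClass_le_two {k : ℕ} (c : TripleVertex s → Fin k)
    (hcf : ∀ v, ((tripleGraph s).neighborSet v).Nonempty →
      ∃ i, {u | u ∈ (tripleGraph s).neighborSet v ∧ c u = i}.ncard = 1) (i : Fin k) :
    (Finset.univ.filter fun x => c (.inl x) = i).card ≤ 2 := by
  by_contra! h
  obtain ⟨T, hTi, hT⟩ := Finset.exists_subset_card_eq h
  have hN : (tripleGraph s).neighborSet (.inr ⟨T, hT⟩) = Sum.inl '' ↑T :=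
    tripleGraph_neighborSet_inr _
  have hmono : ∀ u ∈ (tripleGraph s).neighborSet (.inr ⟨T, hT⟩), c u = i := by
    rw [hN]
    rintro _ ⟨x, hx, rfl⟩
    exact (Finset.mem_filter.mp (hTi hx)).2
  have hne : ((tripleGraph s).neighborSet (.inr ⟨T, hT⟩)).Nonempty := by
    rw [hN]
    exact (Finset.coe_nonempty.mpr (Finset.card_pos.mp (by omega))).image _
  have h1 := ncard_neighborSet_eq_one_of_monochromatic hmono (hcf _ hne)
  rw [hN, Set.ncard_image_of_injective _ Sum.inl_injective, Set.ncard_coe_finset, hT] at h1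
  omega

theorem le_two_mul_of_hasPCFColoring_tripleGraph {k : ℕ}
    (h : HasPCFColoring (tripleGraph s) k) : s ≤ 2 * k := by
  obtain ⟨c, -, hcf⟩ := h
  simpa using Finset.card_le_mul_card_image_of_maps_to
    (f := fun x : Fin s => c (.inl x)) (t := Finset.univ) (fun _ _ => Finset.mem_univ _) 2
    fun i _ => tripleGraph_card_colorClass_le_two c hcf i

end TripleGraph

/-- If `C(s-1, 2)` is odd, then the graph of 3-element subsets of an `s`-element set has
strong odd chromatic number exactly `2` and proper conflict-free chromatic number at
least `s / 2`. -/
theorem triple_graph_strongOdd_eq_two_pcf_ge (s : ℕ) (hs : 3 ≤ s)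
    (hodd : Odd (Nat.choose (s - 1) 2)) :
    (HasStrongOddColoring (tripleGraph s) 2 ∧
      ∀ k : ℕ, HasStrongOddColoring (tripleGraph s) k → 2 ≤ k) ∧
    (∀ k : ℕ, HasPCFColoring (tripleGraph s) k → s ≤ 2 * k) := by
  obtain ⟨u, v, huv⟩ := tripleGraph_exists_adj hs
  exact ⟨⟨hasStrongOddColoring_two_of_odd_ncard_neighborSet _
      (fun _ _ => tripleGraph_sideColoring_ne_of_adj)
      (fun w _ => tripleGraph_odd_ncard_neighborSet hodd w),
    fun _ h => two_le_of_hasStrongOddColoring h huv⟩,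
    fun _ => le_two_mul_of_hasPCFColoring_tripleGraph⟩
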